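/- arXiv:0707.0667 — 2 statements merged into one kernel-verified Lean document; each statement's English description precedes it below -/
import Mathlib

section
/- For every positive integer λ and every n ≥ 0, the Szegő representation holds in truncated form: C_n^{(λ)}(cos θ) · (sin θ)^{2λ-1} = c_n^{(λ)} Σ_{ν=0}^{λ-1} α_{ν,n}^{(λ)} sin((n+2ν+1)θ), where c_n^{(λ)} = 2^{2-2λ} Γ(n+2λ)/(Γ(λ) Γ(n+λ+1)) and α_{ν,n}^{(λ)} = (1-λ)_ν (n+1)_ν / (ν! (n+λ+1)_ν). -/
open Finset

/-- Pochhammer symbol (rising factorial) for a real argument. -/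
noncomputable def poch (a : ℝ) (k : ℕ) : ℝ := ∏ i ∈ Finset.range k, (a + i)

/-- Gegenbauer (ultraspherical) polynomial `C_n^{(λ)}(x)`, via its standard
explicit expansion. -/
noncomputable def gegen (lam : ℝ) (n : ℕ) (x : ℝ) : ℝ :=
  ∑ k ∈ Finset.range (n / 2 + 1),
    (-1 : ℝ) ^ k * poch lam (n - k) /
      ((Nat.factorial k : ℝ) * (Nat.factorial (n - 2 * k) : ℝ)) * (2 * x) ^ (n - 2 * k)

/-!
Both sides satisfy the three-term recurrence
`(n + 2) C_{n+2}(x) = 2x (n + λ + 1) C_{n+1}(x) - (n + 2λ) C_n(x)`.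
For the Gegenbauer polynomial this is read off its explicit expansion term by term.
For the sine sum, `2 cos θ sin((a + 2ν + 1)θ) = sin((a + 2ν + 2)θ) + sin((a + 2ν)θ)`
reduces it to rational identities between the coefficients `c_n α_{ν,n}`, which follow from
the ratios of consecutive coefficients; the sums stay finite because `(1 - λ)_ν = 0` for
`ν ≥ λ`. The case `n = 1` is `2λ cos θ` times the case `n = 0`, and the case `n = 0`, the
expansion of `sin^{2λ-1} θ` in odd multiples of `θ`, follows by induction on `λ` through
multiplication by `sin² θ = 1 - cos² θ`.
-/

open Real

lemma poch_succ (a : ℝ) (k : ℕ) : poch a (k + 1) = poch a k * (a + k) :=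
  prod_range_succ _ k

lemma mul_poch_add_one (a : ℝ) (k : ℕ) : a * poch (a + 1) k = poch a k * (a + k) := by
  induction k with
  | zero => simp [poch]
  | succ k ih =>
    rw [poch_succ, poch_succ, ← mul_assoc, ih]
    push_cast
    ring

lemma poch_add_one {a : ℝ} (ha : a ≠ 0) (k : ℕ) :
    poch (a + 1) k = poch a k * (a + k) / a := by
  rw [eq_div_iff ha, mul_comm, mul_poch_add_one]

lemma poch_pos {a : ℝ} (ha : 0 < a) (k : ℕ) : 0 < poch a k :=
  prod_pos fun i _ => by positivity

lemma poch_one_sub_eq_zero {lam k : ℕ} (hlam : 1 ≤ lam) (hk : lam ≤ k) :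
    poch (1 - lam) k = 0 :=
  prod_eq_zero (i := lam - 1) (mem_range.mpr (by omega)) (by rw [Nat.cast_sub hlam]; ring)

noncomputable def gegenTerm (l x : ℝ) (n k : ℕ) : ℝ :=
  (-1 : ℝ) ^ k * poch l (n - k) / ((k.factorial : ℝ) * ((n - 2 * k).factorial : ℝ)) *
    (2 * x) ^ (n - 2 * k)

lemma gegen_eq_sum_gegenTerm (l : ℝ) (n : ℕ) (x : ℝ) :
    gegen l n x = ∑ k ∈ range (n / 2 + 1), gegenTerm l x n k := rfl

lemma gegen_zero (l x : ℝ) : gegen l 0 x = 1 := by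
  simp [gegen, poch]

lemma gegen_one (l x : ℝ) : gegen l 1 x = 2 * l * x := by
  simp [gegen, poch]
  ring

lemma gegenTerm_recurrence_zero (l x : ℝ) (m : ℕ) :
    (m + 2) * gegenTerm l x (m + 2) 0 = 2 * x * (m + l + 1) * gegenTerm l x (m + 1) 0 := by
  simp only [gegenTerm, Nat.sub_zero, Nat.mul_zero, pow_zero, Nat.factorial_zero]
  rw [poch_succ, Nat.factorial_succ (m + 1), pow_succ]
  have := Nat.factorial_ne_zero (m + 1)
  push_cast
  field_simp
  ring

lemma gegenTerm_recurrence_succ (l x : ℝ) {m k : ℕ} (h : 2 * k + 1 ≤ m) :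
    (m + 2) * gegenTerm l x (m + 2) (k + 1) =
      2 * x * (m + l + 1) * gegenTerm l x (m + 1) (k + 1) - (m + 2 * l) * gegenTerm l x m k := by
  obtain ⟨d, rfl⟩ : ∃ d, m = 2 * k + 1 + d := ⟨m - (2 * k + 1), by omega⟩
  simp only [gegenTerm, show 2 * k + 1 + d + 2 - (k + 1) = k + d + 1 + 1 by omega,
    show 2 * k + 1 + d + 2 - 2 * (k + 1) = d + 1 by omega,
    show 2 * k + 1 + d + 1 - (k + 1) = k + d + 1 by omega,
    show 2 * k + 1 + d + 1 - 2 * (k + 1) = d by omega,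
    show 2 * k + 1 + d - k = k + d + 1 by omega, show 2 * k + 1 + d - 2 * k = d + 1 by omega]
  rw [poch_succ, Nat.factorial_succ d, Nat.factorial_succ k, pow_succ (2 * x) d,
    pow_succ (-1 : ℝ) k]
  have := Nat.factorial_ne_zero d
  have := Nat.factorial_ne_zero k
  push_cast
  field_simp
  ring

lemma gegenTerm_recurrence_top (l x : ℝ) (p : ℕ) :
    (2 * p + 2) * gegenTerm l x (2 * p + 2) (p + 1) =
      -(2 * p + 2 * l) * gegenTerm l x (2 * p) p := by
  simp only [gegenTerm, show 2 * p + 2 - (p + 1) = p + 1 by omega,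
    show 2 * p + 2 - 2 * (p + 1) = 0 by omega, show 2 * p - p = p by omega, Nat.sub_self]
  rw [poch_succ, Nat.factorial_succ p, pow_succ (-1 : ℝ) p]
  have := Nat.factorial_ne_zero p
  push_cast
  field_simp
  ring

lemma gegen_recurrence (l x : ℝ) (m : ℕ) :
    (m + 2) * gegen l (m + 2) x =
      2 * x * (m + l + 1) * gegen l (m + 1) x - (m + 2 * l) * gegen l m x := by
  simp only [gegen_eq_sum_gegenTerm, mul_sum]
  rcases Nat.even_or_odd' m with ⟨p, rfl | rfl⟩
  · rw [show (2 * p + 2) / 2 + 1 = p + 1 + 1 by omega, show (2 * p + 1) / 2 + 1 = p + 1 by omega,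
      show 2 * p / 2 + 1 = p + 1 by omega, sum_range_succ, sum_range_succ', sum_range_succ',
      sum_range_succ _ p, sum_congr rfl fun k hk =>
        gegenTerm_recurrence_succ l x (m := 2 * p) (k := k) (by simp at hk; omega),
      sum_sub_distrib, gegenTerm_recurrence_zero]
    have := gegenTerm_recurrence_top l x p
    push_cast at this ⊢
    linarith
  · rw [show (2 * p + 1 + 2) / 2 + 1 = p + 1 + 1 by omega,
      show (2 * p + 1 + 1) / 2 + 1 = p + 1 + 1 by omega, show (2 * p + 1) / 2 + 1 = p + 1 by omega,
      sum_range_succ', sum_range_succ' _ (p + 1), sum_congr rfl fun k hk =>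
        gegenTerm_recurrence_succ l x (m := 2 * p + 1) (k := k) (by simp at hk; omega),
      sum_sub_distrib, gegenTerm_recurrence_zero]
    ring

noncomputable def sinSeries (c : ℕ → ℝ) (N : ℕ) (a θ : ℝ) : ℝ :=
  ∑ ν ∈ range N, c ν * sin ((a + 2 * ν + 1) * θ)

lemma sinSeries_succ' (c : ℕ → ℝ) (N : ℕ) (a θ : ℝ) :
    sinSeries c (N + 1) a θ =
      c 0 * sin ((a + 1) * θ) + sinSeries (fun ν => c (ν + 1)) N (a + 2) θ := by
  unfold sinSeries
  rw [sum_range_succ', add_comm]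
  congr 1
  · simp
  · refine sum_congr rfl fun ν _ => ?_
    push_cast
    ring_nf

lemma sinSeries_eq_head_add_tail {c : ℕ → ℝ} {N : ℕ} (hc : c N = 0) (a θ : ℝ) :
    sinSeries c N a θ =
      c 0 * sin ((a + 1) * θ) + sinSeries (fun ν => c (ν + 1)) N (a + 2) θ := by
  rw [← sinSeries_succ', sinSeries, sinSeries, sum_range_succ, hc, zero_mul, add_zero]

lemma two_cos_mul_sinSeries {c : ℕ → ℝ} {N : ℕ} (hc : c N = 0) (a θ : ℝ) :
    2 * cos θ * sinSeries c N a θ =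
      c 0 * sin (a * θ) + sinSeries (fun ν => c ν + c (ν + 1)) N (a + 1) θ := by
  have hlow := sinSeries_eq_head_add_tail hc (a - 1) θ
  rw [sub_add_cancel, show a - 1 + 2 = a + 1 by ring] at hlow
  have hprod : 2 * cos θ * sinSeries c N a θ =
      sinSeries c N (a + 1) θ + sinSeries c N (a - 1) θ := by
    simp only [sinSeries, mul_sum, ← sum_add_distrib]
    refine sum_congr rfl fun ν _ => ?_
    rw [show (a + 1 + 2 * ν + 1) * θ = (a + 2 * ν + 1) * θ + θ by ring,
      show (a - 1 + 2 * ν + 1) * θ = (a + 2 * ν + 1) * θ - θ by ring, sin_add, sin_sub]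
    ring
  rw [hprod, hlow]
  simp only [sinSeries, add_mul, sum_add_distrib]
  ring

lemma sin_sq_mul_sinSeries {c d : ℕ → ℝ} {N : ℕ} (hN : c N = 0) (hN1 : c (N + 1) = 0)
    (hd₀ : 4 * d 0 = 3 * c 0 - c 1)
    (hd : ∀ ν < N, 4 * d (ν + 1) = 2 * c (ν + 1) - c ν - c (ν + 2)) (θ : ℝ) :
    sin θ ^ 2 * sinSeries c N 0 θ = sinSeries d (N + 1) 0 θ := by
  have hcos₁ := two_cos_mul_sinSeries hN 0 θ
  have hcos₂ := two_cos_mul_sinSeries (c := fun ν => c ν + c (ν + 1)) (N := N)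
    (by simp [hN, hN1]) 1 θ
  have hc := sinSeries_eq_head_add_tail hN 0 θ
  have hd' := sinSeries_succ' d N 0 θ
  simp only [zero_mul, sin_zero, mul_zero, zero_add, one_mul] at hcos₁ hcos₂ hc hd'
  norm_num at hcos₂
  have hsin : sin θ ^ 2 = 1 - cos θ ^ 2 := by rw [← sin_sq_add_cos_sq θ]; ring
  suffices 4 * sinSeries d (N + 1) 0 θ =
      4 * sinSeries c N 0 θ - 2 * cos θ * (2 * cos θ * sinSeries c N 0 θ) by
    rw [hsin]; linear_combination -this / 4
  rw [hcos₁, hcos₂, hc, hd']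
  have hseries : 4 * sinSeries (fun ν => d (ν + 1)) N 2 θ =
      4 * sinSeries (fun ν => c (ν + 1)) N 2 θ -
        sinSeries (fun ν => c ν + c (ν + 1) + (c (ν + 1) + c (ν + 1 + 1))) N 2 θ := by
    simp only [sinSeries, mul_sum, ← sum_sub_distrib]
    refine sum_congr rfl fun ν hν => ?_
    rw [← mul_assoc, hd ν (mem_range.mp hν)]
    ring
  linear_combination sin θ * hd₀ + hseries

-- `c_n^{(λ)} α_{ν,n}^{(λ)}`
noncomputable def szegoCoeff (lam n ν : ℕ) : ℝ :=
  (2 : ℝ) ^ ((2 : ℤ) - 2 * lam) * Gamma (n + 2 * lam) / (Gamma lam * Gamma (n + lam + 1)) *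
    (poch (1 - lam) ν * poch (n + 1) ν / ((ν.factorial : ℝ) * poch (n + lam + 1) ν))

lemma szegoCoeff_eq_zero {lam : ℕ} (hlam : 1 ≤ lam) (n : ℕ) {ν : ℕ} (hν : lam ≤ ν) :
    szegoCoeff lam n ν = 0 := by
  simp [szegoCoeff, poch_one_sub_eq_zero hlam hν]

lemma szegoCoeff_succ_degree {lam : ℕ} (hlam : 1 ≤ lam) (n ν : ℕ) :
    szegoCoeff lam (n + 1) ν * ((n + 1) * (n + lam + 1 + ν)) =
      szegoCoeff lam n ν * ((n + 2 * lam) * (n + 1 + ν)) := by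
  have hΓ₁ : Gamma (↑(n + 1) + 2 * lam) = (n + 2 * lam) * Gamma (n + 2 * lam) := by
    rw [Nat.cast_succ, add_right_comm, Gamma_add_one (by positivity)]
  have hΓ₂ : Gamma (↑(n + 1) + lam + 1) = (n + lam + 1) * Gamma (n + lam + 1) := by
    rw [Nat.cast_succ, add_right_comm (n : ℝ), Gamma_add_one (by positivity)]
  have hp₁ : poch (↑(n + 1) + 1) ν = poch (n + 1) ν * (n + 1 + ν) / (n + 1) := by
    rw [Nat.cast_succ, poch_add_one (by positivity)]
  have hp₂ : poch (↑(n + 1) + lam + 1) ν =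
      poch (n + lam + 1) ν * (n + lam + 1 + ν) / (n + lam + 1) := by
    rw [Nat.cast_succ, add_right_comm (n : ℝ), poch_add_one (by positivity)]
  have := (Gamma_pos_of_pos (by positivity : (0 : ℝ) < lam)).ne'
  have := (Gamma_pos_of_pos (by positivity : (0 : ℝ) < n + lam + 1)).ne'
  have := (poch_pos (by positivity : (0 : ℝ) < n + lam + 1) ν).ne'
  have := Nat.factorial_ne_zero ν
  rw [szegoCoeff, szegoCoeff, hΓ₁, hΓ₂, hp₁, hp₂]
  field_simp

lemma szegoCoeff_succ_index {lam : ℕ} (hlam : 1 ≤ lam) (n ν : ℕ) :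
    szegoCoeff lam n (ν + 1) * ((ν + 1) * (n + lam + 1 + ν)) =
      szegoCoeff lam n ν * ((1 - lam + ν) * (n + 1 + ν)) := by
  have := (Gamma_pos_of_pos (by positivity : (0 : ℝ) < lam)).ne'
  have := (Gamma_pos_of_pos (by positivity : (0 : ℝ) < n + lam + 1)).ne'
  have := (poch_pos (by positivity : (0 : ℝ) < n + lam + 1) ν).ne'
  have := Nat.factorial_ne_zero ν
  rw [szegoCoeff, szegoCoeff, poch_succ, poch_succ, poch_succ, Nat.factorial_succ]
  push_cast
  field_simp

lemma szegoCoeff_succ_param {lam : ℕ} (hlam : 1 ≤ lam) (ν : ℕ) :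
    szegoCoeff (lam + 1) 0 ν * (2 * (lam + 1) * (ν - lam) * (lam + 1 + ν)) =
      szegoCoeff lam 0 ν * (-(2 * lam + 1) * lam * (lam + 1)) := by
  have hΓ₁ : Gamma (2 * (lam + 1)) = (2 * lam + 1) * (2 * lam) * Gamma (2 * lam) := by
    rw [show (2 * (lam + 1) : ℝ) = 2 * lam + 1 + 1 by ring,
      Gamma_add_one (by positivity), Gamma_add_one (by positivity)]
    ring
  have hΓ₂ : Gamma (lam + 1) = lam * Gamma lam := Gamma_add_one (by positivity)
  have hΓ₃ : Gamma (lam + 1 + 1) = (lam + 1) * lam * Gamma lam := by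
    rw [Gamma_add_one (by positivity), hΓ₂, mul_assoc]
  have hp₁ : poch (1 - (lam + 1)) ν * (ν - lam) = -lam * poch (1 - lam) ν := by
    rw [show (1 - (lam + 1) : ℝ) = -lam by ring, show (1 - lam : ℝ) = -lam + 1 by ring,
      mul_poch_add_one]
    ring
  have hp₂ : poch (lam + 1 + 1) ν = poch (lam + 1) ν * (lam + 1 + ν) / (lam + 1) :=
    poch_add_one (by positivity) ν
  have h2 : (2 : ℝ) ^ ((2 : ℤ) - 2 * (lam + 1)) = 2 ^ ((2 : ℤ) - 2 * lam) / 4 := by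
    rw [show (2 : ℤ) - 2 * (lam + 1) = (2 - 2 * lam) - 2 by ring, zpow_sub₀ two_ne_zero]
    norm_num
  have := (Gamma_pos_of_pos (by positivity : (0 : ℝ) < lam)).ne'
  have := (Gamma_pos_of_pos (by positivity : (0 : ℝ) < 2 * lam)).ne'
  have := (poch_pos (by positivity : (0 : ℝ) < lam + 1) ν).ne'
  have := Nat.factorial_ne_zero ν
  simp only [szegoCoeff, Nat.cast_zero, zero_add, Nat.cast_succ]
  rw [hΓ₁, hΓ₂, hΓ₃, hp₂, h2]
  field_simp
  linear_combination 4 * poch 1 ν * hp₁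

lemma szegoCoeff_recurrence_zero {lam : ℕ} (hlam : 1 ≤ lam) (n : ℕ) :
    (n + lam + 1) * szegoCoeff lam (n + 1) 0 = (n + 2 * lam) * szegoCoeff lam n 0 := by
  have h := szegoCoeff_succ_degree hlam n 0
  simp only [Nat.cast_zero, add_zero] at h
  apply mul_left_cancel₀ (by positivity : (n + 1 : ℝ) ≠ 0)
  linear_combination h

lemma szegoCoeff_recurrence {lam : ℕ} (hlam : 1 ≤ lam) (n ν : ℕ) :
    (n + 2) * szegoCoeff lam (n + 2) ν =
      (n + lam + 1) * (szegoCoeff lam (n + 1) ν + szegoCoeff lam (n + 1) (ν + 1)) -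
        (n + 2 * lam) * szegoCoeff lam n (ν + 1) := by
  have h₁ := szegoCoeff_succ_degree hlam n ν
  have h₂ := szegoCoeff_succ_degree hlam (n + 1) ν
  have h₃ := szegoCoeff_succ_index hlam n ν
  have h₄ := szegoCoeff_succ_index hlam (n + 1) ν
  push_cast at h₂ h₄
  rw [← eq_div_iff (by positivity)] at h₁ h₂ h₃ h₄
  rw [h₂, h₄, h₃, h₁]
  field_simp
  ring

lemma szegoCoeff_one_degree {lam : ℕ} (hlam : 1 ≤ lam) (ν : ℕ) :
    szegoCoeff lam 1 ν = lam * (szegoCoeff lam 0 ν + szegoCoeff lam 0 (ν + 1)) := by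
  have h₁ := szegoCoeff_succ_degree hlam 0 ν
  have h₂ := szegoCoeff_succ_index hlam 0 ν
  simp only [Nat.cast_zero, zero_add] at h₁ h₂
  apply mul_left_cancel₀ (by positivity : ((ν + 1) * (lam + 1 + ν) : ℝ) ≠ 0)
  linear_combination (ν + 1 : ℝ) * h₁ - (lam : ℝ) * h₂

lemma szegoCoeff_succ_param_zero {lam : ℕ} (hlam : 1 ≤ lam) :
    4 * szegoCoeff (lam + 1) 0 0 = 3 * szegoCoeff lam 0 0 - szegoCoeff lam 0 1 := by
  have h₁ := szegoCoeff_succ_param hlam 0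
  have h₂ := szegoCoeff_succ_index hlam 0 0
  simp only [Nat.cast_zero, zero_add, add_zero, zero_sub] at h₁ h₂
  apply mul_left_cancel₀ (by positivity : (2 * lam * (lam + 1) * (lam + 1) : ℝ) ≠ 0)
  linear_combination (-4 : ℝ) * h₁ + 2 * lam * (lam + 1) * h₂

lemma szegoCoeff_succ_param_succ {lam : ℕ} (hlam : 1 ≤ lam) (ν : ℕ) :
    4 * szegoCoeff (lam + 1) 0 (ν + 1) =
      2 * szegoCoeff lam 0 (ν + 1) - szegoCoeff lam 0 ν - szegoCoeff lam 0 (ν + 2) := by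
  have h₁ := szegoCoeff_succ_param hlam ν
  have h₂ := szegoCoeff_succ_index (by omega : 1 ≤ lam + 1) 0 ν
  have h₃ := szegoCoeff_succ_index hlam 0 ν
  have h₄ := szegoCoeff_succ_index hlam 0 (ν + 1)
  push_cast at h₂ h₃ h₄
  have h : szegoCoeff (lam + 1) 0 (ν + 1) * (2 * (lam + 1 + ν) * (lam + 2 + ν)) =
      -lam * (2 * lam + 1) * szegoCoeff lam 0 ν := by
    apply mul_left_cancel₀ (by positivity : ((ν + 1) * (lam + 1) : ℝ) ≠ 0)
    linear_combination 2 * (lam + 1 : ℝ) * (lam + 1 + ν) * h₂ + (1 + ν : ℝ) * h₁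
  rw [← eq_div_iff (by positivity)] at h h₃ h₄
  rw [h, h₄, h₃]
  field_simp
  ring


noncomputable def szegoSum (lam n : ℕ) (θ : ℝ) : ℝ :=
  sinSeries (szegoCoeff lam n) lam n θ

lemma szegoSum_recurrence {lam : ℕ} (hlam : 1 ≤ lam) (n : ℕ) (θ : ℝ) :
    (n + 2) * szegoSum lam (n + 2) θ =
      2 * cos θ * (n + lam + 1) * szegoSum lam (n + 1) θ - (n + 2 * lam) * szegoSum lam n θ := by
  have h₁ := two_cos_mul_sinSeries (szegoCoeff_eq_zero hlam (n + 1) le_rfl) (n + 1) θ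
  have h₀ := sinSeries_eq_head_add_tail (szegoCoeff_eq_zero hlam n le_rfl) n θ
  have hseries : (n + 2) * sinSeries (szegoCoeff lam (n + 2)) lam (n + 2) θ =
      (n + lam + 1) *
          sinSeries (fun ν => szegoCoeff lam (n + 1) ν + szegoCoeff lam (n + 1) (ν + 1))
            lam (n + 1 + 1) θ -
        (n + 2 * lam) * sinSeries (fun ν => szegoCoeff lam n (ν + 1)) lam (n + 2) θ := by
    simp only [sinSeries, mul_sum, ← sum_sub_distrib]
    refine sum_congr rfl fun ν _ => ?_
    rw [← mul_assoc, szegoCoeff_recurrence hlam]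
    ring_nf
  simp only [szegoSum]
  push_cast
  linear_combination hseries - (n + lam + 1 : ℝ) * h₁ + (n + 2 * lam : ℝ) * h₀ -
    sin ((n + 1) * θ) * szegoCoeff_recurrence_zero hlam n

lemma szegoSum_zero {lam : ℕ} (hlam : 1 ≤ lam) (θ : ℝ) :
    szegoSum lam 0 θ = sin θ ^ (2 * lam - 1) := by
  induction lam, hlam using Nat.le_induction with
  | base => simp [szegoSum, sinSeries, szegoCoeff, poch, one_add_one_eq_two]
  | succ lam hlam ih =>
    rw [show 2 * (lam + 1) - 1 = 2 + (2 * lam - 1) by omega, pow_add, ← ih]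
    simp only [szegoSum, Nat.cast_zero]
    exact (sin_sq_mul_sinSeries (szegoCoeff_eq_zero hlam 0 le_rfl)
      (szegoCoeff_eq_zero hlam 0 (Nat.le_succ lam)) (szegoCoeff_succ_param_zero hlam)
      (fun ν _ => szegoCoeff_succ_param_succ hlam ν) θ).symm

lemma szegoSum_one {lam : ℕ} (hlam : 1 ≤ lam) (θ : ℝ) :
    szegoSum lam 1 θ = 2 * lam * cos θ * szegoSum lam 0 θ := by
  have h := two_cos_mul_sinSeries (szegoCoeff_eq_zero hlam 0 le_rfl) 0 θ
  simp only [szegoSum, Nat.cast_zero, Nat.cast_one, zero_mul, sin_zero, mul_zero, zero_add] at h ⊢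
  rw [show 2 * lam * cos θ * sinSeries (szegoCoeff lam 0) lam 0 θ =
      lam * (2 * cos θ * sinSeries (szegoCoeff lam 0) lam 0 θ) by ring,
    h, sinSeries, sinSeries, mul_sum]
  refine sum_congr rfl fun ν _ => ?_
  rw [szegoCoeff_one_degree hlam]
  ring

lemma gegen_cos_mul_sin_pow {lam : ℕ} (hlam : 1 ≤ lam) (n : ℕ) (θ : ℝ) :
    gegen lam n (cos θ) * sin θ ^ (2 * lam - 1) = szegoSum lam n θ := by
  induction n using Nat.twoStepInduction with
  | zero => rw [gegen_zero, szegoSum_zero hlam, one_mul]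
  | one => rw [gegen_one, szegoSum_one hlam, szegoSum_zero hlam]
  | more n ih₀ ih₁ =>
    apply mul_left_cancel₀ (by positivity : (n + 2 : ℝ) ≠ 0)
    rw [szegoSum_recurrence hlam, ← ih₀, ← ih₁, ← mul_assoc, gegen_recurrence]
    ring

theorem szego_truncated_representation (lam : ℕ) (hlam : 1 ≤ lam) (n : ℕ) (θ : ℝ) :
    gegen lam n (Real.cos θ) * (Real.sin θ) ^ (2 * lam - 1) =
      (2 : ℝ) ^ ((2 : ℤ) - 2 * lam) * Real.Gamma (n + 2 * lam) /
          (Real.Gamma lam * Real.Gamma (n + lam + 1)) *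
        ∑ ν ∈ Finset.range lam,
          poch (1 - lam) ν * poch (n + 1) ν /
              ((Nat.factorial ν : ℝ) * poch (n + lam + 1) ν) *
            Real.sin (((n : ℝ) + 2 * ν + 1) * θ) := by
  rw [gegen_cos_mul_sin_pow hlam, szegoSum, sinSeries, mul_sum]
  exact sum_congr rfl fun ν _ => by rw [szegoCoeff, mul_assoc]
end

section
/- For every n ≥ 0 and every integer m with 1 ≤ m ≤ n+1, ∫₀^π cos(2mθ) log((U_n(cos θ))²) dθ = π(1/m − δ_{m,n+1}), where U_n is the Chebyshev polynomial of the second kind and δ is the Kronecker delta. -/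
open Finset

/-!
The expansion defining `gegen 1 n x` is the explicit formula for `S_n(2x) = U_n(x)`, with `S` the
rescaled Chebyshev polynomials. Since `U_n(cos θ) sin θ = sin((n+1)θ)`, off a discrete set the
integrand is `2 cos(2mθ) (log sin((n+1)θ) - log sin θ)`.

Integrating by parts against `sin(2mθ) / (2m)`, the boundary terms vanish and
`sin(2mθ) cos θ / sin θ` is a trigonometric polynomial with mean `1` on `[0, π]`, so
`∫₀^π cos(2mθ) log sin θ = -π/(2m)`.

Substituting `u = Nθ` and using the `π`-periodicity of `log sin`, the integral of
`cos(2mθ) log sin(Nθ)` becomes that of `log sin v` against the average of `cos(2m(v + kπ)/N)`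
over `k < N`; this average is `cos(2(m/N)v)` when `N ∣ m` and vanishes otherwise.
-/

open Real Polynomial Polynomial.Chebyshev intervalIntegral
open MeasureTheory (volume)

namespace Polynomial.Chebyshev

variable (R : Type*) [CommRing R]

noncomputable def sTerm (n k : ℕ) : R[X] :=
  (-1) ^ k * ((n - k).choose k : R[X]) * X ^ (n - 2 * k)

variable {R}

lemma sTerm_zero_right (n : ℕ) : sTerm R n 0 = X ^ n := by simp [sTerm]

lemma sTerm_eq_zero {n k : ℕ} (h : n < 2 * k) : sTerm R n k = 0 := by
  simp [sTerm, Nat.choose_eq_zero_of_lt (show n - k < k by omega)]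

lemma sTerm_add_two_succ (n k : ℕ) :
    sTerm R (n + 2) (k + 1) = X * sTerm R (n + 1) (k + 1) - sTerm R n k := by
  rcases lt_or_ge n (2 * k) with h | h
  · rw [sTerm_eq_zero (by omega), sTerm_eq_zero (by omega), sTerm_eq_zero h]; ring
  obtain ⟨r, rfl⟩ := Nat.exists_eq_add_of_le h
  rcases r with _ | r
  · simp only [sTerm, show 2 * k + 0 + 2 - (k + 1) = k + 1 by omega,
      show 2 * k + 0 + 2 - 2 * (k + 1) = 0 by omega, show 2 * k + 0 + 1 - (k + 1) = k by omega,
      show 2 * k + 0 - k = k by omega, show 2 * k + 0 - 2 * k = 0 by omega,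
      Nat.choose_succ_self, Nat.choose_self]
    simp [pow_succ]
  · simp only [sTerm, show 2 * k + (r + 1) + 2 - (k + 1) = k + r + 1 + 1 by omega,
      show 2 * k + (r + 1) + 2 - 2 * (k + 1) = r + 1 by omega,
      show 2 * k + (r + 1) + 1 - (k + 1) = k + r + 1 by omega,
      show 2 * k + (r + 1) + 1 - 2 * (k + 1) = r by omega,
      show 2 * k + (r + 1) - k = k + r + 1 by omega,
      show 2 * k + (r + 1) - 2 * k = r + 1 by omega, Nat.choose_succ_succ' (k + r + 1) k]
    push_cast
    ring

theorem S_natCast_eq_sum (n : ℕ) : S R n = ∑ k ∈ range (n + 1), sTerm R n k := by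
  induction n using Nat.twoStepInduction with
  | zero => simp [sTerm]
  | one => simp [sum_range_succ, sTerm]
  | more n ih₀ ih₁ =>
    have hS : S R ((n + 2 : ℕ) : ℤ) = X * S R (n + 1 : ℕ) - S R n := by
      push_cast; exact S_add_two R n
    rw [hS, ih₀, ih₁, sum_range_succ' _ (n + 2), sum_range_succ' _ (n + 1)]
    simp only [sTerm_add_two_succ, sum_sub_distrib, ← mul_sum, sTerm_zero_right]
    rw [sum_range_succ (fun k => sTerm R n k) (n + 1), sum_range_succ _ (n + 1),
      sTerm_eq_zero (by omega), sTerm_eq_zero (by omega)]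
    ring

end Polynomial.Chebyshev

lemma poch_one (j : ℕ) : poch 1 j = j.factorial := by
  rw [poch, ← prod_range_add_one_eq_factorial]
  push_cast
  exact prod_congr rfl fun i _ => add_comm _ _

lemma gegen_one_eq_eval_U (n : ℕ) (x : ℝ) : gegen 1 n x = (U ℝ n).eval x := by
  rw [← S_comp_two_mul_X, eval_comp, S_natCast_eq_sum, eval_finsetSum,
    ← sum_subset (range_subset_range.2 (by omega : n / 2 + 1 ≤ n + 1))]
  · refine sum_congr rfl fun k hk => ?_
    have hk : 2 * k ≤ n := by rw [mem_range] at hk; omega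
    simp only [poch_one, sTerm, eval_mul, eval_pow, eval_neg, eval_one, eval_natCast, eval_X,
      eval_ofNat, Nat.cast_choose ℝ (by omega : k ≤ n - k), show n - k - k = n - 2 * k by omega]
    ring
  · intro k _ hk
    rw [sTerm_eq_zero (by rw [mem_range] at hk; omega), eval_zero]

lemma log_eval_U_cos {n : ℕ} {θ : ℝ} (h : sin ((n + 1) * θ) ≠ 0) :
    log ((U ℝ n).eval (cos θ)) = log (sin ((n + 1) * θ)) - log (sin θ) := by
  have hU := U_real_cos θ n
  push_cast at hU
  rw [← hU] at h ⊢
  rw [log_mul (left_ne_zero_of_mul h) (right_ne_zero_of_mul h)]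
  ring

lemma analyticOnNhd_sin_const_mul (c : ℝ) : AnalyticOnNhd ℝ (fun θ => sin (c * θ)) Set.univ :=
  fun _ _ => by fun_prop

lemma eventually_codiscrete_sin_nat_succ_mul_ne_zero (n : ℕ) :
    ∀ᶠ θ in Filter.codiscrete ℝ, sin ((n + 1) * θ) ≠ 0 :=
  (analyticOnNhd_sin_const_mul (n + 1)).preimage_zero_mem_codiscrete
    (x := π / (2 * (n + 1))) (by field_simp; simp)

lemma intervalIntegrable_mul_log_sin_const_mul {φ : ℝ → ℝ} (hφ : Continuous φ) (c a b : ℝ) :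
    IntervalIntegrable (fun θ => φ θ * log (sin (c * θ))) volume a b :=
  ((analyticOnNhd_sin_const_mul c).mono (Set.subset_univ _)).meromorphicOn.intervalIntegrable_log
    |>.continuousOn_mul hφ.continuousOn

lemma periodic_log_sin : Function.Periodic (fun θ => log (sin θ)) π := fun θ => by
  simp [sin_add_pi, log_neg_eq_log]

lemma continuous_sin_nat_mul_mul_log_sin (m : ℕ) :
    Continuous fun θ => sin (m * θ) * log (sin θ) := by
  have hU : ∀ θ, sin (m * θ) = (U ℝ (m - 1)).eval (cos θ) * sin θ := fun θ => by
    rw [U_real_cos]; push_cast; ring_nf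
  simp_rw [hU, mul_assoc]
  exact ((U ℝ _).continuous.comp continuous_cos).mul (continuous_mul_log.comp continuous_sin)

lemma sin_two_nat_mul_mul_cos (m : ℕ) (θ : ℝ) :
    sin (2 * m * θ) * cos θ =
      sin θ * ∑ j ∈ range m, (cos (2 * (j + 1) * θ) + cos (2 * j * θ)) := by
  induction m with
  | zero => simp
  | succ m ih =>
    have hsin := sin_add ((2 * m + 1) * θ) θ
    have hsin' := sin_sub ((2 * m + 1) * θ) θ
    have hcos := cos_add ((2 * m + 1) * θ) θ
    have hcos' := cos_sub ((2 * m + 1) * θ) θ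
    rw [sum_range_succ, mul_add, ← ih]
    push_cast
    ring_nf at hsin hsin' hcos hcos' ⊢
    linear_combination cos θ * hsin - cos θ * hsin' - sin θ * hcos - sin θ * hcos'

lemma integral_cos_two_nat_mul (k : ℕ) :
    ∫ θ in 0..π, cos (2 * k * θ) = if k = 0 then π else 0 := by
  split_ifs with hk
  · simp [hk]
  · have hk' : (2 * k : ℝ) ≠ 0 := by positivity
    rw [integral_comp_mul_left (fun θ => cos θ) hk', integral_cos,
      show 2 * (k : ℝ) * π = (2 * k : ℕ) * π by push_cast; ring, sin_nat_mul_pi]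
    simp

lemma integral_sum_cos_two_nat_mul {m : ℕ} (hm : m ≠ 0) :
    ∫ θ in 0..π, ∑ j ∈ range m, (cos (2 * (j + 1) * θ) + cos (2 * j * θ)) = π := by
  rw [integral_finsetSum fun j _ => by apply Continuous.intervalIntegrable; fun_prop]
  have h : ∀ j ∈ range m,
      ∫ θ in 0..π, (cos (2 * (j + 1) * θ) + cos (2 * j * θ)) = if j = 0 then π else 0 := by
    intro j _
    rw [integral_add (by apply Continuous.intervalIntegrable; fun_prop)
      (by apply Continuous.intervalIntegrable; fun_prop)]
    have h₁ := integral_cos_two_nat_mul (j + 1)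
    push_cast at h₁
    rw [h₁, integral_cos_two_nat_mul]
    simp
  rw [sum_congr rfl h, sum_ite_eq' (range m) 0, if_pos (by simp; omega)]

lemma integral_cos_two_nat_mul_mul_log_sin {m : ℕ} (hm : m ≠ 0) :
    ∫ θ in 0..π, cos (2 * m * θ) * log (sin θ) = -π / (2 * m) := by
  set D : ℝ → ℝ := fun θ => ∑ j ∈ range m, (cos (2 * (j + 1) * θ) + cos (2 * j * θ))
  have hderiv : ∀ θ ∈ Set.Ioo 0 π, HasDerivAt (fun θ => sin (2 * m * θ) * log (sin θ))
      (2 * m * (cos (2 * m * θ) * log (sin θ)) + D θ) θ := by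
    intro θ hθ
    have hs : sin θ ≠ 0 := (sin_pos_of_pos_of_lt_pi hθ.1 hθ.2).ne'
    have hD : sin (2 * m * θ) * (cos θ / sin θ) = D θ := by
      rw [← mul_div_assoc, sin_two_nat_mul_mul_cos, mul_div_cancel_left₀ _ hs]
    have h := (((hasDerivAt_id θ).const_mul (2 * m : ℝ)).sin).fun_mul ((hasDerivAt_sin θ).log hs)
    simp only [id, mul_one, hD] at h
    exact h.congr_deriv (by ring)
  have hint : IntervalIntegrable (fun θ => cos (2 * m * θ) * log (sin θ)) volume 0 π :=
    intervalIntegrable_log_sin.continuousOn_mul (by fun_prop)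
  have hcont : Continuous fun θ => sin (2 * m * θ) * log (sin θ) := by
    simpa [mul_assoc] using continuous_sin_nat_mul_mul_log_sin (2 * m)
  have hFTC := integral_eq_sub_of_hasDerivAt_of_le pi_pos.le hcont.continuousOn hderiv
    ((hint.const_mul _).add (by apply Continuous.intervalIntegrable; fun_prop))
  rw [integral_add (hint.const_mul _) (by apply Continuous.intervalIntegrable; fun_prop),
    intervalIntegral.integral_const_mul, integral_sum_cos_two_nat_mul hm] at hFTC
  simp only [sin_pi, mul_zero, sin_zero, log_zero, sub_self] at hFTC
  field_simp
  linarith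

lemma Function.Periodic.integral_mul_comp_nat_mul {h φ : ℝ → ℝ} {T : ℝ}
    (hh : Function.Periodic h T) (hT : T ≠ 0) (hint : IntervalIntegrable h volume 0 T)
    (hφ : Continuous φ) {N : ℕ} (hN : N ≠ 0) :
    ∫ θ in 0..T, φ θ * h (N * θ) =
      (N : ℝ)⁻¹ * ∫ v in 0..T, (∑ k ∈ range N, φ ((v + k * T) / N)) * h v := by
  have hN' : (N : ℝ) ≠ 0 := by exact_mod_cast hN
  set g : ℝ → ℝ := fun u => φ (u / N) * h u
  have hg : ∀ a b, IntervalIntegrable g volume a b := fun a b =>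
    (hh.intervalIntegrable hT (t := 0) (by simpa using hint) a b).continuousOn_mul
      (hφ.comp (continuous_id.div_const _)).continuousOn
  have hshift : ∀ k : ℕ, ∫ u in k * T..(k + 1) * T, g u =
      ∫ v in 0..T, φ ((v + k * T) / N) * h v := by
    intro k
    rw [← zero_add (k * T : ℝ), show ((k : ℝ) + 1) * T = T + k * T by ring,
      ← integral_comp_add_right, zero_add]
    simp only [g, (hh.nat_mul k) _]
  calc ∫ θ in 0..T, φ θ * h (N * θ)
      = ∫ θ in 0..T, g (N * θ) := by simp only [g, mul_div_cancel_left₀ _ hN']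
    _ = (N : ℝ)⁻¹ * ∑ k ∈ range N, ∫ u in k * T..(k + 1) * T, g u := by
      have h := sum_integral_adjacent_intervals (a := fun k : ℕ => k * T) (n := N)
        fun k _ => hg _ _
      push_cast at h
      rw [integral_comp_mul_left g hN', mul_zero, smul_eq_mul, ← zero_mul T, h]
    _ = (N : ℝ)⁻¹ * ∫ v in 0..T, (∑ k ∈ range N, φ ((v + k * T) / N)) * h v := by
      simp only [hshift, sum_mul]
      rw [integral_finsetSum fun k _ => hint.continuousOn_mul (by fun_prop)]

lemma sum_range_cos_add_nat_mul_two_pi_div {m N : ℕ} (hmN : ¬ N ∣ m) (x : ℝ) :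
    ∑ k ∈ range N, cos (x + k * (2 * π * m / N)) = 0 := by
  obtain rfl | hN := eq_or_ne N 0
  · simp
  set b := 2 * π * m / N with hb_def
  have hb : sin (b / 2) ≠ 0 := by
    rw [Ne, sin_eq_zero_iff]
    rintro ⟨n, hn⟩
    rw [hb_def] at hn
    field_simp at hn
    exact hmN (Int.natCast_dvd_natCast.1 ⟨n, by rw [mul_comm]; exact_mod_cast hn.symm⟩)
  have hNb : x + N * b - b / 2 = x - b / 2 + (m : ℕ) * (2 * π) := by
    rw [hb_def]; field_simp; ring
  have htele : ∀ k : ℕ, 2 * sin (b / 2) * cos (x + k * b) =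
      sin (x + (k + 1 : ℕ) * b - b / 2) - sin (x + k * b - b / 2) := fun k => by
    rw [sin_sub_sin]; push_cast; ring_nf
  apply mul_right_injective₀ (mul_ne_zero two_ne_zero hb)
  simp only [mul_sum, htele, sum_range_sub (fun k : ℕ => sin (x + k * b - b / 2)), hNb,
    sin_add_nat_mul_two_pi]
  simp

lemma integral_cos_two_nat_mul_mul_log_sin_nat_mul {m N : ℕ} (hm : m ≠ 0) (hN : N ≠ 0) :
    ∫ θ in 0..π, cos (2 * m * θ) * log (sin (N * θ)) =
      if N ∣ m then -π * N / (2 * m) else 0 := by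
  rw [periodic_log_sin.integral_mul_comp_nat_mul pi_ne_zero intervalIntegrable_log_sin
    (φ := fun θ => cos (2 * m * θ)) (by fun_prop) hN]
  split_ifs with hmN
  · obtain ⟨q, rfl⟩ := hmN
    have hq : q ≠ 0 := by rintro rfl; simp at hm
    have hsum : ∀ v : ℝ, ∑ k ∈ range N, cos (2 * (N * q : ℕ) * ((v + k * π) / N)) =
        N * cos (2 * q * v) := fun v => by
      rw [sum_congr rfl fun k _ => ?_, sum_const, card_range, nsmul_eq_mul]
      rw [← cos_add_nat_mul_two_pi (2 * q * v) (k * q)]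
      congr 1
      push_cast
      field_simp
    simp_rw [hsum, mul_assoc (N : ℝ), intervalIntegral.integral_const_mul,
      integral_cos_two_nat_mul_mul_log_sin hq]
    push_cast
    field_simp
  · have hsum : ∀ v : ℝ, ∑ k ∈ range N, cos (2 * m * ((v + k * π) / N)) = 0 := fun v => by
      rw [← sum_range_cos_add_nat_mul_two_pi_div hmN (2 * m * v / N)]
      refine sum_congr rfl fun k _ => congrArg cos ?_
      field_simp
    simp [hsum]

theorem chebyshevU_log_integral (n m : ℕ) (hm1 : 1 ≤ m) (hm2 : m ≤ n + 1) :
    ∫ θ in (0 : ℝ)..Real.pi,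
        Real.cos (2 * m * θ) * Real.log ((gegen 1 n (Real.cos θ)) ^ 2) =
      Real.pi * (1 / (m : ℝ) - if m = n + 1 then 1 else 0) := by
  have hm : m ≠ 0 := by omega
  have hsplit : (fun θ => cos (2 * m * θ) * log (gegen 1 n (cos θ) ^ 2))
      =ᶠ[Filter.codiscreteWithin (Set.uIoc 0 π)] fun θ =>
        2 * (cos (2 * m * θ) * log (sin ((n + 1 : ℕ) * θ)) - cos (2 * m * θ) * log (sin θ)) := by
    filter_upwards [Filter.codiscreteWithin_mono (Set.subset_univ _)
      (eventually_codiscrete_sin_nat_succ_mul_ne_zero n)] with θ hθ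
    rw [gegen_one_eq_eval_U, log_pow, log_eval_U_cos hθ]
    push_cast
    ring
  have hdvd : n + 1 ∣ m ↔ m = n + 1 :=
    ⟨fun h => le_antisymm hm2 (Nat.le_of_dvd (by omega) h), fun h => h ▸ dvd_rfl⟩
  rw [integral_congr_codiscreteWithin hsplit, intervalIntegral.integral_const_mul,
    integral_sub (intervalIntegrable_mul_log_sin_const_mul (by fun_prop) _ _ _)
      (by exact intervalIntegrable_log_sin.continuousOn_mul (by fun_prop)),
    integral_cos_two_nat_mul_mul_log_sin_nat_mul hm n.succ_ne_zero,
    integral_cos_two_nat_mul_mul_log_sin hm]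
  simp only [Nat.succ_eq_add_one, hdvd]
  split_ifs with h
  · subst h; push_cast; field_simp; ring
  · field_simp; ring
end
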